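/- Let n ≥ 4 and let x_1, …, x_n be real numbers. Set x̄ = (1/n) ∑_i x_i, p_r = ∑_i (x_i - x̄)^r, and define α = -6p_2/(n(n-1)), β = -8p_3/(n(n-1)(n-2)), γ = 3(p_2^2 - 2p_4)/(n(n-1)(n-2)(n-3)). Then 256 γ^3 - 128 α^2 γ^2 + 144 α β^2 γ - 27 β^4 + 16 α^4 γ - 4 α^3 β^2 ≥ 0. -/

import Mathlib

open Finset Polynomial

private lemma multiset_card_eq_four' {α : Type*} {m : Multiset α} (h : Multiset.card m = 4) :
    ∃ a b c d, m = {a, b, c, d} := by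
  have h0 : m ≠ 0 := by rintro rfl; simp at h
  obtain ⟨a, ha⟩ := Multiset.exists_mem_of_ne_zero h0
  obtain ⟨t, rfl⟩ := Multiset.exists_cons_of_mem ha
  rw [Multiset.card_cons] at h
  obtain ⟨b, c, d, rfl⟩ := (Multiset.card_eq_three (s := t)).mp (by omega)
  exact ⟨a, b, c, d, rfl⟩

private lemma dfA' (m : ℕ) : 12 * (m+4).descFactorial m = (m+4)*(m+3)*((m+2).descFactorial m) := by
  induction m with
  | zero => rfl
  | succ k ih =>
    have h1 : (k+4+1).descFactorial (k+1) = (k+4+1) * (k+4).descFactorial k :=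
      Nat.succ_descFactorial_succ _ _
    have h2 : (k+2+1).descFactorial (k+1) = (k+2+1) * (k+2).descFactorial k :=
      Nat.succ_descFactorial_succ _ _
    show 12 * (k+4+1).descFactorial (k+1) = (k+1+4)*(k+1+3)*((k+2+1).descFactorial (k+1))
    rw [h1, h2]; nlinarith [ih]

private lemma dfB' (m : ℕ) :
    24 * (m+4).descFactorial m = (m+4)*(m+3)*(m+2)*((m+1).descFactorial m) := by
  induction m with
  | zero => rfl
  | succ k ih =>
    have h1 : (k+4+1).descFactorial (k+1) = (k+4+1) * (k+4).descFactorial k :=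
      Nat.succ_descFactorial_succ _ _
    have h2 : (k+1+1).descFactorial (k+1) = (k+1+1) * (k+1).descFactorial k :=
      Nat.succ_descFactorial_succ _ _
    show 24 * (k+4+1).descFactorial (k+1) = (k+1+4)*(k+1+3)*(k+1+2)*((k+1+1).descFactorial (k+1))
    rw [h1, h2]; nlinarith [ih]

private lemma dfC' (m : ℕ) :
    24 * (m+4).descFactorial m = (m+4)*(m+3)*(m+2)*(m+1)*(m.descFactorial m) := by
  induction m with
  | zero => rfl
  | succ k ih =>
    have h1 : (k+4+1).descFactorial (k+1) = (k+4+1) * (k+4).descFactorial k :=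
      Nat.succ_descFactorial_succ _ _
    have h2 : (k+1).descFactorial (k+1) = (k+1) * (k.descFactorial k) :=
      Nat.succ_descFactorial_succ _ _
    show 24 * (k+4+1).descFactorial (k+1) = (k+1+4)*(k+1+3)*(k+1+2)*(k+1+1)*((k+1).descFactorial (k+1))
    rw [h1, h2]; nlinarith [ih]

private lemma iter_deriv_card' (p : ℝ[X]) (h : Multiset.card p.roots = p.natDegree) (k : ℕ)
    (hk : k ≤ p.natDegree) :
    (derivative^[k] p).natDegree = p.natDegree - k ∧
      Multiset.card (derivative^[k] p).roots = p.natDegree - k := by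
  induction k with
  | zero => exact ⟨rfl, h⟩
  | succ j ih =>
    obtain ⟨hd, hc⟩ := ih (by omega)
    set q := derivative^[j] p with hq
    have hd1 : (derivative q).natDegree ≤ p.natDegree - (j+1) := by
      have := natDegree_derivative_le q; omega
    have hc1 : p.natDegree - (j+1) ≤ Multiset.card (derivative q).roots := by
      have := q.card_roots_le_derivative; omega
    have hc2 : Multiset.card (derivative q).roots ≤ (derivative q).natDegree := card_roots' _
    rw [Function.iterate_succ_apply', ← hq]
    omega

set_option maxHeartbeats 2000000 in
theorem normalized_quartic_discriminant_nonneg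
    (n : ℕ) (hn : 4 ≤ n) (x : Fin n → ℝ)
    (xbar p₂ p₃ p₄ α β γ : ℝ)
    (hxbar : xbar = (∑ i, x i) / n)
    (hp₂ : p₂ = ∑ i, (x i - xbar) ^ 2)
    (hp₃ : p₃ = ∑ i, (x i - xbar) ^ 3)
    (hp₄ : p₄ = ∑ i, (x i - xbar) ^ 4)
    (hα : α = -6 * p₂ / ((n : ℝ) * ((n : ℝ) - 1)))
    (hβ : β = -8 * p₃ / ((n : ℝ) * ((n : ℝ) - 1) * ((n : ℝ) - 2)))
    (hγ : γ = 3 * (p₂ ^ 2 - 2 * p₄) / ((n : ℝ) * ((n : ℝ) - 1) * ((n : ℝ) - 2) * ((n : ℝ) - 3))) :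
    256 * γ ^ 3 - 128 * α ^ 2 * γ ^ 2 + 144 * α * β ^ 2 * γ - 27 * β ^ 4
      + 16 * α ^ 4 * γ - 4 * α ^ 3 * β ^ 2 ≥ 0 := by
  have hn0 : (n : ℝ) ≥ 4 := by exact_mod_cast hn
  set y : Fin n → ℝ := fun i => x i - xbar with hy
  -- sum of centered values is zero
  have hp1 : ∑ i, y i = 0 := by
    simp only [hy, Finset.sum_sub_distrib, Finset.sum_const, Finset.card_univ,
      Fintype.card_fin, nsmul_eq_mul, hxbar]
    field_simp
    ring
  -- multiset of values and elementary symmetric functions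
  set M : Multiset ℝ := Finset.univ.val.map y with hM
  set E : ℕ → ℝ := fun k => M.esymm k with hE
  have hMcard : Multiset.card M = n := by simp [hM]
  have hEeval : ∀ k, MvPolynomial.aeval y (MvPolynomial.esymm (Fin n) ℝ k) = E k := by
    intro k
    rw [MvPolynomial.aeval_esymm_eq_multiset_esymm]
  have hpsum : ∀ k, MvPolynomial.aeval y (MvPolynomial.psum (Fin n) ℝ k) = ∑ i, y i ^ k := by
    intro k; simp [MvPolynomial.psum]
  -- Newton's identities, evaluated
  have hE1 : E 1 = 0 := by
    rw [← hEeval, MvPolynomial.esymm_one]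
    simpa using hp1
  have hE2 : 2 * E 2 = -p₂ := by
    have key := congrArg (MvPolynomial.aeval y) (MvPolynomial.mul_esymm_eq_sum (Fin n) ℝ 2)
    have hanti : (Finset.HasAntidiagonal.antidiagonal 2).filter (fun a : ℕ × ℕ => a.1 < 2) = {(0,2),(1,1)} := by
      decide
    rw [hanti, Finset.sum_pair (by decide)] at key
    simp only [map_mul, map_add, map_pow, map_neg, map_one, map_natCast, hpsum, hEeval,
      MvPolynomial.esymm_zero, map_one, pow_one] at key
    push_cast at key
    rw [hp1] at key
    rw [hp₂, show ∑ i, (x i - xbar) ^ 2 = ∑ i, y i ^ 2 from rfl]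
    linarith [key]
  have hE3 : 3 * E 3 = p₃ := by
    have key := congrArg (MvPolynomial.aeval y) (MvPolynomial.mul_esymm_eq_sum (Fin n) ℝ 3)
    have hanti : (Finset.HasAntidiagonal.antidiagonal 3).filter (fun a : ℕ × ℕ => a.1 < 3)
        = {(0,3),(1,2),(2,1)} := by decide
    rw [hanti, Finset.sum_insert (by decide), Finset.sum_pair (by decide)] at key
    simp only [map_mul, map_add, map_pow, map_neg, map_one, map_natCast, hpsum, hEeval,
      MvPolynomial.esymm_zero, map_one, pow_one] at key
    push_cast at key
    rw [hp1, hE1] at key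
    rw [hp₃, show ∑ i, (x i - xbar) ^ 3 = ∑ i, y i ^ 3 from rfl]
    linarith [key]
  have hE4 : 4 * E 4 = -p₄ - E 2 * p₂ := by
    have key := congrArg (MvPolynomial.aeval y) (MvPolynomial.mul_esymm_eq_sum (Fin n) ℝ 4)
    have hanti : (Finset.HasAntidiagonal.antidiagonal 4).filter (fun a : ℕ × ℕ => a.1 < 4)
        = {(0,4),(1,3),(2,2),(3,1)} := by decide
    rw [hanti, Finset.sum_insert (by decide), Finset.sum_insert (by decide),
      Finset.sum_pair (by decide)] at key
    simp only [map_mul, map_add, map_pow, map_neg, map_one, map_natCast, hpsum, hEeval,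
      MvPolynomial.esymm_zero, map_one, pow_one] at key
    push_cast at key
    rw [hp1, hE1] at key
    rw [hp₂, show ∑ i, (x i - xbar) ^ 2 = ∑ i, y i ^ 2 from rfl,
      hp₄, show ∑ i, (x i - xbar) ^ 4 = ∑ i, y i ^ 4 from rfl]
    linarith [key]
  -- the polynomial ∏ (X - yᵢ)
  set Pp : ℝ[X] := (M.map fun r => X - C r).prod with hPp
  have hPdeg : Pp.natDegree = n := by
    rw [hPp, natDegree_multiset_prod_X_sub_C_eq_card, hMcard]
  have hProots : Pp.roots = M := roots_multiset_prod_X_sub_C M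
  have hPmonic : Pp.Monic := monic_multiset_prod_of_monic _ _ fun a _ => monic_X_sub_C a
  -- iterated derivative
  set Q : ℝ[X] := derivative^[n-4] Pp with hQ
  obtain ⟨hQdeg, hQcard⟩ := iter_deriv_card' Pp (by rw [hProots, hMcard, hPdeg]) (n-4)
    (by omega)
  rw [hPdeg] at hQdeg hQcard
  have h4 : n - (n - 4) = 4 := by omega
  rw [h4] at hQdeg hQcard
  obtain ⟨a, b, c, d, hroots⟩ := multiset_card_eq_four' hQcard
  -- factorization of Q
  set L : ℝ := Q.leadingCoeff with hL
  have hfact : C L * ((Q.roots.map fun r => X - C r).prod) = Q :=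
    C_leadingCoeff_mul_prod_multiset_X_sub_C (by rw [hQcard, hQdeg])
  rw [hroots] at hfact
  have hprodexp : (({a, b, c, d} : Multiset ℝ).map fun r => X - C r).prod
      = (X - C a) * ((X - C b) * ((X - C c) * (X - C d))) := by
    simp [Multiset.map_cons, Multiset.prod_cons]
  rw [hprodexp] at hfact
  have hQeq : Q = C L * X^4 - C (L*(a+b+c+d)) * X^3
      + C (L*(a*b+a*c+a*d+b*c+b*d+c*d)) * X^2
      - C (L*(a*b*c+a*b*d+a*c*d+b*c*d)) * X + C (L*(a*b*c*d)) := by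
    rw [← hfact]
    simp only [C_mul, C_add]
    ring
  -- coefficients of Q from the factorization
  have ctac : ∀ m : ℕ, Q.coeff m
      = L * (X^4 : ℝ[X]).coeff m - (L*(a+b+c+d)) * ((X^3 : ℝ[X]).coeff m)
      + (L*(a*b+a*c+a*d+b*c+b*d+c*d)) * ((X^2 : ℝ[X]).coeff m)
      - (L*(a*b*c+a*b*d+a*c*d+b*c*d)) * ((X : ℝ[X]).coeff m)
      + (C (L*(a*b*c*d)) : ℝ[X]).coeff m := by
    intro m
    rw [hQeq]
    simp only [coeff_add, coeff_sub, coeff_C_mul]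
  have c4 : Q.coeff 4 = L := by rw [ctac]; norm_num [coeff_X_pow, coeff_X, coeff_C]
  have c3 : Q.coeff 3 = -(L*(a+b+c+d)) := by rw [ctac]; norm_num [coeff_X_pow, coeff_X, coeff_C]
  have c2 : Q.coeff 2 = L*(a*b+a*c+a*d+b*c+b*d+c*d) := by
    rw [ctac]; norm_num [coeff_X_pow, coeff_X, coeff_C]
  have c1 : Q.coeff 1 = -(L*(a*b*c+a*b*d+a*c*d+b*c*d)) := by
    rw [ctac]; norm_num [coeff_X_pow, coeff_X, coeff_C]
  have c0 : Q.coeff 0 = L*(a*b*c*d) := by rw [ctac]; norm_num [coeff_X_pow, coeff_X, coeff_C]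
  -- coefficients of Q from iterated derivative
  have hQc : ∀ m : ℕ, Q.coeff m = ((m + (n-4)).descFactorial (n-4) : ℝ) * Pp.coeff (m + (n-4)) := by
    intro m
    rw [hQ, coeff_iterate_derivative, nsmul_eq_mul]
  -- coefficients of Pp via esymm
  have hPc : ∀ m : ℕ, m ≤ 4 → Pp.coeff (m + (n-4)) = (-1)^(4-m) * E (4-m) := by
    intro m hm
    have h1 : m + (n-4) ≤ Multiset.card M := by rw [hMcard]; omega
    have key := Multiset.prod_X_sub_C_coeff M h1
    rw [hMcard] at key
    have h2 : n - (m + (n-4)) = 4 - m := by omega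
    rw [h2] at key
    exact key
  have hPtop : Pp.coeff (4 + (n-4)) = 1 := by
    have : 4 + (n - 4) = n := by omega
    rw [this, ← hPdeg]
    exact hPmonic.coeff_natDegree
  -- the five coefficient equations
  set N : ℝ := ((n.descFactorial (n-4) : ℕ) : ℝ) with hN
  have hNL : L = N := by
    have := hQc 4
    rw [hPtop, c4] at this
    have h44 : 4 + (n-4) = n := by omega
    rw [h44] at this
    simpa [hN] using this
  have hNpos : 0 < N := by
    rw [hN]
    have : n.descFactorial (n-4) ≠ 0 := by
      rw [Ne, Nat.descFactorial_eq_zero_iff_lt]; omega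
    exact_mod_cast Nat.pos_of_ne_zero this
  have hQ3 := hQc 3; rw [c3, hPc 3 (by omega)] at hQ3
  have hQ2 := hQc 2; rw [c2, hPc 2 (by omega)] at hQ2
  have hQ1 := hQc 1; rw [c1, hPc 1 (by omega)] at hQ1
  have hQ0 := hQc 0; rw [c0, hPc 0 (by omega)] at hQ0
  norm_num at hQ3 hQ2 hQ1 hQ0
  -- descFactorial identities, cast to ℝ
  have hm4 : n - 4 + 4 = n := by omega
  have castdf : ∀ (j : ℕ), j ≤ 4 → (((n - j).descFactorial (n-4) : ℕ) : ℝ)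
      = (((n - 4 + (4 - j)).descFactorial (n-4) : ℕ) : ℝ) := by
    intro j hj
    congr 2
    omega
  have hdA : 12 * N = ((n:ℝ)) * ((n:ℝ) - 1) * (((n-2).descFactorial (n-4) : ℕ) : ℝ) := by
    have h := dfA' (n-4)
    rw [hm4, show n-4+3 = n-1 by omega, show n-4+2 = n-2 by omega] at h
    calc 12 * N = ((12 * n.descFactorial (n-4) : ℕ) : ℝ) := by rw [hN]; push_cast; ring
    _ = ((n * (n-1) * ((n-2).descFactorial (n-4)) : ℕ) : ℝ) := by rw [h]
    _ = ((n:ℝ)) * ((n:ℝ) - 1) * (((n-2).descFactorial (n-4) : ℕ) : ℝ) := by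
        rw [Nat.cast_mul, Nat.cast_mul, Nat.cast_sub (by omega : 1 ≤ n)]; push_cast; ring
  have hdB : 24 * N = ((n:ℝ)) * ((n:ℝ) - 1) * ((n:ℝ) - 2) * (((n-3).descFactorial (n-4) : ℕ) : ℝ) := by
    have h := dfB' (n-4)
    rw [hm4, show n-4+3 = n-1 by omega, show n-4+2 = n-2 by omega,
      show n-4+1 = n-3 by omega] at h
    calc 24 * N = ((24 * n.descFactorial (n-4) : ℕ) : ℝ) := by rw [hN]; push_cast; ring
    _ = ((n * (n-1) * (n-2) * ((n-3).descFactorial (n-4)) : ℕ) : ℝ) := by rw [h]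
    _ = ((n:ℝ)) * ((n:ℝ) - 1) * ((n:ℝ) - 2) * (((n-3).descFactorial (n-4) : ℕ) : ℝ) := by
        rw [Nat.cast_mul, Nat.cast_mul, Nat.cast_mul, Nat.cast_sub (by omega : 1 ≤ n),
          Nat.cast_sub (by omega : 2 ≤ n)]
        push_cast; ring
  have hdC : 24 * N = ((n:ℝ)) * ((n:ℝ) - 1) * ((n:ℝ) - 2) * ((n:ℝ) - 3)
      * ((((n-4)).descFactorial (n-4) : ℕ) : ℝ) := by
    have h := dfC' (n-4)
    rw [hm4, show n-4+3 = n-1 by omega, show n-4+2 = n-2 by omega,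
      show n-4+1 = n-3 by omega] at h
    calc 24 * N = ((24 * n.descFactorial (n-4) : ℕ) : ℝ) := by rw [hN]; push_cast; ring
    _ = ((n * (n-1) * (n-2) * (n-3) * ((n-4).descFactorial (n-4)) : ℕ) : ℝ) := by rw [h]
    _ = ((n:ℝ)) * ((n:ℝ) - 1) * ((n:ℝ) - 2) * ((n:ℝ) - 3) * (((n-4).descFactorial (n-4) : ℕ) : ℝ) := by
        rw [Nat.cast_mul, Nat.cast_mul, Nat.cast_mul, Nat.cast_mul,
          Nat.cast_sub (by omega : 1 ≤ n), Nat.cast_sub (by omega : 2 ≤ n),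
          Nat.cast_sub (by omega : 3 ≤ n)]
        push_cast; ring
  -- rewrite index arithmetic in hQ3..hQ0
  have i3 : 3 + (n - 4) = n - 1 := by omega
  have i2 : 2 + (n - 4) = n - 2 := by omega
  have i1 : 1 + (n - 4) = n - 3 := by omega
  rw [i3] at hQ3; rw [i2] at hQ2; rw [i1] at hQ1
  -- symmetric functions of the roots
  have hs1 : a + b + c + d = 0 := by
    rw [hE1] at hQ3
    have : N * (a+b+c+d) = 0 := by rw [← hNL]; linarith [hQ3]
    rcases mul_eq_zero.mp this with h | h
    · exact absurd h (ne_of_gt hNpos)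
    · exact h
  -- positivity facts
  have hn1 : (0:ℝ) < (n:ℝ) * ((n:ℝ)-1) := mul_pos (by linarith) (by linarith)
  have hn2 : (0:ℝ) < (n:ℝ) * ((n:ℝ)-1) * ((n:ℝ)-2) := mul_pos hn1 (by linarith)
  have hn3 : (0:ℝ) < (n:ℝ) * ((n:ℝ)-1) * ((n:ℝ)-2) * ((n:ℝ)-3) := mul_pos hn2 (by linarith)
  -- α = s2
  have hα2 : α = a*b+a*c+a*d+b*c+b*d+c*d := by
    have h3 : α * ((n:ℝ) * ((n:ℝ)-1)) = -6 * p₂ := by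
      rw [hα, div_mul_cancel₀ _ (ne_of_gt hn1)]
    have key : N * ((n:ℝ) * ((n:ℝ)-1)) * (a*b+a*c+a*d+b*c+b*d+c*d)
        = N * ((n:ℝ) * ((n:ℝ)-1)) * α := by
      linear_combination ((n:ℝ)*((n:ℝ)-1))*hQ2
        - ((n:ℝ)*((n:ℝ)-1))*(a*b+a*c+a*d+b*c+b*d+c*d)*hNL - E 2 * hdA - N*h3 + 6*N*hE2
    have hne : N * ((n:ℝ) * ((n:ℝ)-1)) ≠ 0 := ne_of_gt (mul_pos hNpos hn1)
    exact (mul_left_cancel₀ hne key).symm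
  have hβ2 : β = -(a*b*c+a*b*d+a*c*d+b*c*d) := by
    have h3 : β * ((n:ℝ) * ((n:ℝ)-1) * ((n:ℝ)-2)) = -8 * p₃ := by
      rw [hβ, div_mul_cancel₀ _ (ne_of_gt hn2)]
    have key : N * ((n:ℝ) * ((n:ℝ)-1) * ((n:ℝ)-2)) * (a*b*c+a*b*d+a*c*d+b*c*d)
        = N * ((n:ℝ) * ((n:ℝ)-1) * ((n:ℝ)-2)) * (-β) := by
      linear_combination ((n:ℝ)*((n:ℝ)-1)*((n:ℝ)-2))*hQ1
        - ((n:ℝ)*((n:ℝ)-1)*((n:ℝ)-2))*(a*b*c+a*b*d+a*c*d+b*c*d)*hNL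
        - E 3 * hdB + 8*N*hE3 + N*h3
    have hne : N * ((n:ℝ) * ((n:ℝ)-1) * ((n:ℝ)-2)) ≠ 0 := ne_of_gt (mul_pos hNpos hn2)
    have h := mul_left_cancel₀ hne key
    linarith [h]
  have hγ2 : γ = a*b*c*d := by
    have h3 : γ * ((n:ℝ) * ((n:ℝ)-1) * ((n:ℝ)-2) * ((n:ℝ)-3)) = 3 * (p₂^2 - 2*p₄) := by
      rw [hγ, div_mul_cancel₀ _ (ne_of_gt hn3)]
    have key : N * ((n:ℝ) * ((n:ℝ)-1) * ((n:ℝ)-2) * ((n:ℝ)-3)) * (a*b*c*d)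
        = N * ((n:ℝ) * ((n:ℝ)-1) * ((n:ℝ)-2) * ((n:ℝ)-3)) * γ := by
      linear_combination ((n:ℝ)*((n:ℝ)-1)*((n:ℝ)-2)*((n:ℝ)-3))*hQ0
        - ((n:ℝ)*((n:ℝ)-1)*((n:ℝ)-2)*((n:ℝ)-3))*(a*b*c*d)*hNL
        - E 4 * hdC + 6*N*hE4 - 3*N*p₂*hE2 - N*h3
    have hne : N * ((n:ℝ) * ((n:ℝ)-1) * ((n:ℝ)-2) * ((n:ℝ)-3)) ≠ 0 := ne_of_gt (mul_pos hNpos hn3)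
    exact (mul_left_cancel₀ hne key).symm
  -- conclude
  have hd : d = -a - b - c := by linarith [hs1]
  rw [hα2, hβ2, hγ2, hd]
  have : 256 * (a*b*c*(-a-b-c)) ^ 3
      - 128 * (a*b + a*c + a*(-a-b-c) + b*c + b*(-a-b-c) + c*(-a-b-c)) ^ 2 * (a*b*c*(-a-b-c)) ^ 2
      + 144 * (a*b + a*c + a*(-a-b-c) + b*c + b*(-a-b-c) + c*(-a-b-c))
        * (-(a*b*c + a*b*(-a-b-c) + a*c*(-a-b-c) + b*c*(-a-b-c))) ^ 2 * (a*b*c*(-a-b-c))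
      - 27 * (-(a*b*c + a*b*(-a-b-c) + a*c*(-a-b-c) + b*c*(-a-b-c))) ^ 4
      + 16 * (a*b + a*c + a*(-a-b-c) + b*c + b*(-a-b-c) + c*(-a-b-c)) ^ 4 * (a*b*c*(-a-b-c))
      - 4 * (a*b + a*c + a*(-a-b-c) + b*c + b*(-a-b-c) + c*(-a-b-c)) ^ 3
        * (-(a*b*c + a*b*(-a-b-c) + a*c*(-a-b-c) + b*c*(-a-b-c))) ^ 2
      = ((a-b)*(a-c)*(a-(-a-b-c))*(b-c)*(b-(-a-b-c))*(c-(-a-b-c)))^2 := by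
    ring
  rw [this]
  positivity
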